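/- Let σ₁ be an n×n and σ₂ an m×m complex positive definite matrix, let ρ₁, ρ₂ be positive semidefinite matrices of matching sizes, and let α > 0 with α ≠ 1 and z > 0 be real numbers. Then trace[(((σ₁ ⊗ₖ σ₂)^{(1−α)/(2z)}) · ((ρ₁ ⊗ₖ ρ₂)^{α/z}) · ((σ₁ ⊗ₖ σ₂)^{(1−α)/(2z)}))^z] = trace[((σ₁^{(1−α)/(2z)}) · (ρ₁^{α/z}) · (σ₁^{(1−α)/(2z)}))^z] · trace[((σ₂^{(1−α)/(2z)}) · (ρ₂^{α/z}) · (σ₂^{(1−α)/(2z)}))^z]. -/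

import Mathlib

/-!
If `A = U diag(a) U*` and `B = V diag(b) V*` are spectral decompositions, then
`A ⊗ B = (U ⊗ V) diag(aᵢ bⱼ) (U ⊗ V)*`, so the functional calculus of `A ⊗ B` acts on the
products `aᵢ bⱼ`. Since `t ↦ t ^ r` is multiplicative on `[0, ∞)`, this gives
`(A ⊗ B) ^ r = A ^ r ⊗ B ^ r` for positive semidefinite `A` and `B`. Applied to `σ`, to `ρ`,
and then to the positive semidefinite sandwiches, it turns the left-hand side into the trace
of a Kronecker product, and `tr (X ⊗ Y) = tr X * tr Y`.
-/

open Matrix Kronecker ComplexOrder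

/-- The `r`-th power of a complex square matrix, obtained via the (real) continuous
functional calculus applied to `t ↦ t ^ r` (real `rpow`, so that `0 ^ r = 0` for `r ≠ 0`). -/
noncomputable def matRpow {k : Type*} [Fintype k] [DecidableEq k]
    (A : Matrix k k ℂ) (r : ℝ) : Matrix k k ℂ :=
  cfc (fun x : ℝ => x ^ r) A

/-- The absolute value `|A| := (Aᴴ · A)^{1/2}` of a complex square matrix, where the square
root is taken via the continuous functional calculus. -/
noncomputable def matAbs {k : Type*} [Fintype k] [DecidableEq k]
    (A : Matrix k k ℂ) : Matrix k k ℂ :=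
  matRpow (Aᴴ * A) (1 / 2 : ℝ)

theorem cfc_unitary_conj {A : Type*} [Ring A] [StarRing A] [TopologicalSpace A]
    [IsTopologicalRing A] [Algebra ℝ A] [ContinuousFunctionalCalculus ℝ A IsSelfAdjoint]
    [ContinuousMap.UniqueHom ℝ A] {u : A} (hu : u ∈ unitary A) (f : ℝ → ℝ) (a : A)
    (hf : ContinuousOn f (spectrum ℝ a) := by cfc_cont_tac) (ha : IsSelfAdjoint a := by cfc_tac) :
    cfc f (u * a * star u) = u * cfc f a * star u :=
  (StarAlgHomClass.map_cfc (S := ℝ) (Unitary.conjStarAlgAut ℝ A ⟨u, hu⟩) f a hf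
    ((continuous_const.mul continuous_id).mul continuous_const) ha (ha.conjugate u)).symm

namespace Matrix

variable {k l 𝕜 : Type*} [RCLike 𝕜]

theorem star_kronecker (U : Matrix k k 𝕜) (V : Matrix l l 𝕜) :
    star (U ⊗ₖ V) = star U ⊗ₖ star V := by
  simp only [star_eq_conjTranspose, conjTranspose_kronecker]

variable [DecidableEq k]

theorem isHermitian_diagonal_ofReal (d : k → ℝ) :
    (diagonal (RCLike.ofReal ∘ d) : Matrix k k 𝕜).IsHermitian :=
  isHermitian_diagonal_of_self_adjoint _ <| funext fun i => RCLike.conj_ofReal (d i)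

variable [Fintype k] [Fintype l] [DecidableEq l]

noncomputable def diagonalEvalStarAlgHom {X : Type*} [TopologicalSpace X] (x : k → X) :
    C(X, ℝ) →⋆ₐ[ℝ] Matrix k k 𝕜 where
  toFun g := diagonal (RCLike.ofReal ∘ g ∘ x)
  map_one' := by simp [Function.comp_def, Pi.one_def]
  map_mul' f g := by simp [Function.comp_def, diagonal_mul_diagonal]
  map_zero' := by simp [Function.comp_def, Pi.zero_def]
  map_add' f g := by simp [Function.comp_def, diagonal_add]
  commutes' r := by simp [Function.comp_def, algebraMap_eq_diagonal, Pi.algebraMap_def]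
  map_star' f := by
    simp [star_eq_conjTranspose, diagonal_conjTranspose, Pi.star_def, Function.comp_def]

theorem continuous_diagonalEvalStarAlgHom {X : Type*} [TopologicalSpace X] (x : k → X) :
    Continuous (diagonalEvalStarAlgHom (𝕜 := 𝕜) x) :=
  show Continuous fun g : C(X, ℝ) => diagonal (RCLike.ofReal ∘ g ∘ x) by fun_prop

theorem cfc_diagonal (d : k → ℝ) (f : ℝ → ℝ) :
    cfc f (diagonal (RCLike.ofReal ∘ d) : Matrix k k 𝕜) = diagonal (RCLike.ofReal ∘ f ∘ d) := by
  set D : Matrix k k 𝕜 := diagonal (RCLike.ofReal ∘ d)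
  have hD : IsSelfAdjoint D := isHermitian_diagonal_ofReal d
  have hd (i : k) : d i ∈ spectrum ℝ D := by
    rw [← spectrum.algebraMap_mem_iff 𝕜, spectrum_diagonal]
    exact ⟨i, rfl⟩
  have hcfcHom := cfcHom_eq_of_continuous_of_map_id hD
    (diagonalEvalStarAlgHom fun i => ⟨d i, hd i⟩) (continuous_diagonalEvalStarAlgHom _) rfl
  rw [cfc_apply f D hD (finite_real_spectrum.continuousOn f), hcfcHom]
  rfl

variable {A : Matrix k k 𝕜} {B : Matrix l l 𝕜}

theorem IsHermitian.kronecker_spectral_theorem (hA : A.IsHermitian) (hB : B.IsHermitian) :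
    A ⊗ₖ B = (hA.eigenvectorUnitary ⊗ₖ hB.eigenvectorUnitary : Matrix (k × l) (k × l) 𝕜) *
      diagonal (RCLike.ofReal ∘ fun p => hA.eigenvalues p.1 * hB.eigenvalues p.2) *
      star (hA.eigenvectorUnitary ⊗ₖ hB.eigenvectorUnitary : Matrix (k × l) (k × l) 𝕜) := by
  conv_lhs => rw [hA.spectral_theorem, hB.spectral_theorem]
  simp only [Unitary.conjStarAlgAut_apply, mul_kronecker_mul, diagonal_kronecker_diagonal,
    star_kronecker]
  congr
  ext p
  simp

theorem IsHermitian.cfc_kronecker (hA : A.IsHermitian) (hB : B.IsHermitian) (f : ℝ → ℝ)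
    (hf : ∀ i j, f (hA.eigenvalues i * hB.eigenvalues j) =
      f (hA.eigenvalues i) * f (hB.eigenvalues j)) :
    cfc f (A ⊗ₖ B) = cfc f A ⊗ₖ cfc f B := by
  rw [hA.kronecker_spectral_theorem hB,
    cfc_unitary_conj (kronecker_mem_unitary hA.eigenvectorUnitary.2 hB.eigenvectorUnitary.2) f _
      (finite_real_spectrum.continuousOn f) (isHermitian_diagonal_ofReal _),
    cfc_diagonal, hA.cfc_eq, hB.cfc_eq]
  simp only [IsHermitian.cfc, Unitary.conjStarAlgAut_apply, mul_kronecker_mul,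
    diagonal_kronecker_diagonal, star_kronecker]
  congr
  ext p
  simp [hf]

end Matrix

section MatRpow

open scoped MatrixOrder

variable {k l : Type*} [Fintype k] [DecidableEq k] [Fintype l] [DecidableEq l]

theorem isHermitian_matRpow (A : Matrix k k ℂ) (r : ℝ) : (matRpow A r).IsHermitian :=
  cfc_predicate _ A

theorem posSemidef_matRpow {A : Matrix k k ℂ} (hA : A.PosSemidef) (r : ℝ) :
    (matRpow A r).PosSemidef := by
  rw [← nonneg_iff_posSemidef]
  exact cfc_nonneg fun x hx => Real.rpow_nonneg (spectrum_nonneg_of_nonneg hA.nonneg hx) r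

theorem posSemidef_matRpow_mul_mul_matRpow (σ : Matrix k k ℂ) {ρ : Matrix k k ℂ}
    (hρ : ρ.PosSemidef) (s t : ℝ) : (matRpow σ s * matRpow ρ t * matRpow σ s).PosSemidef := by
  simpa only [(isHermitian_matRpow σ s).eq] using
    (posSemidef_matRpow hρ t).mul_mul_conjTranspose_same (matRpow σ s)

theorem matRpow_kronecker {A : Matrix k k ℂ} {B : Matrix l l ℂ} (hA : A.PosSemidef)
    (hB : B.PosSemidef) (r : ℝ) : matRpow (A ⊗ₖ B) r = matRpow A r ⊗ₖ matRpow B r :=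
  hA.1.cfc_kronecker hB.1 _ fun i j =>
    Real.mul_rpow (hA.eigenvalues_nonneg i) (hB.eigenvalues_nonneg j)

end MatRpow

theorem renyi_az_multiplicative_posDef_general {n m : ℕ}
    (σ₁ : Matrix (Fin n) (Fin n) ℂ) (σ₂ : Matrix (Fin m) (Fin m) ℂ)
    (ρ₁ : Matrix (Fin n) (Fin n) ℂ) (ρ₂ : Matrix (Fin m) (Fin m) ℂ)
    (hσ₁ : σ₁.PosDef) (hσ₂ : σ₂.PosDef) (hρ₁ : ρ₁.PosSemidef) (hρ₂ : ρ₂.PosSemidef)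
    (α z : ℝ) :
    (matRpow (matRpow (σ₁ ⊗ₖ σ₂) ((1 - α) / (2 * z)) * matRpow (ρ₁ ⊗ₖ ρ₂) (α / z)
        * matRpow (σ₁ ⊗ₖ σ₂) ((1 - α) / (2 * z))) z).trace
      = (matRpow (matRpow σ₁ ((1 - α) / (2 * z)) * matRpow ρ₁ (α / z)
            * matRpow σ₁ ((1 - α) / (2 * z))) z).trace
        * (matRpow (matRpow σ₂ ((1 - α) / (2 * z)) * matRpow ρ₂ (α / z)
            * matRpow σ₂ ((1 - α) / (2 * z))) z).trace := by
  rw [matRpow_kronecker hσ₁.posSemidef hσ₂.posSemidef, matRpow_kronecker hρ₁ hρ₂,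
    ← mul_kronecker_mul, ← mul_kronecker_mul,
    matRpow_kronecker (posSemidef_matRpow_mul_mul_matRpow σ₁ hρ₁ _ _)
      (posSemidef_matRpow_mul_mul_matRpow σ₂ hρ₂ _ _),
    trace_kronecker]

/-- Multiplicativity of the α-z-Rényi quantity under Kronecker products, in the faithful
case (positive definite `σᵢ`), for any `α > 0`, `α ≠ 1` and `z > 0`. -/
theorem renyi_az_multiplicative_posDef {n m : ℕ}
    (σ₁ : Matrix (Fin n) (Fin n) ℂ) (σ₂ : Matrix (Fin m) (Fin m) ℂ)
    (ρ₁ : Matrix (Fin n) (Fin n) ℂ) (ρ₂ : Matrix (Fin m) (Fin m) ℂ)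
    (hσ₁ : σ₁.PosDef) (hσ₂ : σ₂.PosDef) (hρ₁ : ρ₁.PosSemidef) (hρ₂ : ρ₂.PosSemidef)
    (α z : ℝ) (hα₀ : 0 < α) (hα₁ : α ≠ 1) (hz : 0 < z) :
    (matRpow (matRpow (σ₁ ⊗ₖ σ₂) ((1 - α) / (2 * z)) * matRpow (ρ₁ ⊗ₖ ρ₂) (α / z)
        * matRpow (σ₁ ⊗ₖ σ₂) ((1 - α) / (2 * z))) z).trace
      = (matRpow (matRpow σ₁ ((1 - α) / (2 * z)) * matRpow ρ₁ (α / z)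
            * matRpow σ₁ ((1 - α) / (2 * z))) z).trace
        * (matRpow (matRpow σ₂ ((1 - α) / (2 * z)) * matRpow ρ₂ (α / z)
            * matRpow σ₂ ((1 - α) / (2 * z))) z).trace :=
  renyi_az_multiplicative_posDef_general σ₁ σ₂ ρ₁ ρ₂ hσ₁ hσ₂ hρ₁ hρ₂ α z
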